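/- arXiv:2304.01324 — 3 statements merged into one kernel-verified Lean document; each statement's English description precedes it below -/
import Mathlib

section
/- Under the assumptions that λ_n is an eigenvalue of the self-adjoint compact operator K with dist(λ_n, spec(K)\{λ_n}) ≥ ρ and ‖K − K^δ‖ ≤ δ < ρ/2, the spectral Riesz projections P_n = (2πi)^{-1}∮_{Γ_n}(λI − K)^{-1}dλ and P_n^δ = (2πi)^{-1}∮_{Γ_n}(λI − K^δ)^{-1}dλ satisfy ‖P_n − P_n^δ‖ ≤ δ/(ρ/2 − δ). -/
/-!
A point `z` of the circle `|z - μ| = ρ/2` lies at distance at least `ρ/2` from `σ(K)`. Since the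
norm of a normal element of a C⋆-algebra is its spectral radius, `‖(z - K)⁻¹‖ ≤ (ρ/2)⁻¹`. A Neumann
series argument keeps `z - Kδ` invertible, and the second resolvent identity
`R_K - R_Kδ = R_K (K - Kδ) R_Kδ` gives `‖(z - Kδ)⁻¹‖ ≤ (ρ/2 - δ)⁻¹` and
`‖R_K(z) - R_Kδ(z)‖ ≤ (ρ/2)⁻¹ δ (ρ/2 - δ)⁻¹`. Integrating over the circle, of length `πρ`, and
dividing by `2π` gives `δ / (ρ/2 - δ)`.
-/

open scoped Real

open Complex Metric

theorem Metric.half_le_dist_of_mem_sphere_of_le_infDist {α : Type*} [PseudoMetricSpace α]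
    {x y z : α} {s : Set α} {ρ : ℝ} (hρ : ρ ≤ infDist x (s \ {x})) (hz : z ∈ sphere x (ρ / 2))
    (hy : y ∈ s) : ρ / 2 ≤ dist z y := by
  rw [mem_sphere'] at hz
  rcases eq_or_ne y x with rfl | hyx
  · rw [dist_comm, hz]
  · have hxy : infDist x (s \ {x}) ≤ dist x y := infDist_le_dist_of_mem ⟨hy, hyx⟩
    linarith [dist_triangle x z y]

namespace spectrum

section NormedAlgebra

variable {𝕜 A : Type*} [NormedField 𝕜] [NormedRing A] [NormedAlgebra 𝕜 A]
  [HasSummableGeomSeries A] {a b : A} {z : 𝕜}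

theorem mem_resolventSet_of_norm_sub_mul_lt (hz : z ∈ resolventSet 𝕜 a)
    (hab : ‖a - b‖ * ‖resolvent a z‖ < 1) : z ∈ resolventSet 𝕜 b := by
  nontriviality A
  have hpos : 0 < ‖resolvent a z‖ := by
    rw [resolvent_eq hz]
    exact Units.norm_pos _
  have hnear : ‖(algebraMap 𝕜 A z - b) - ↑hz.unit‖ < ‖(↑hz.unit⁻¹ : A)‖⁻¹ := by
    rwa [hz.unit_spec, sub_sub_sub_cancel_left, ← resolvent_eq hz, ← one_div, lt_div_iff₀ hpos]
  exact (hz.unit.ofNearby _ hnear).isUnit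

theorem norm_resolvent_le_of_norm_sub_le {s d : ℝ} (hz : z ∈ resolventSet 𝕜 a)
    (ha : ‖resolvent a z‖ ≤ s⁻¹) (hab : ‖a - b‖ ≤ d) (hds : d < s) :
    z ∈ resolventSet 𝕜 b ∧ ‖resolvent b z‖ ≤ (s - d)⁻¹ := by
  have hd : 0 ≤ d := (norm_nonneg _).trans hab
  have hs : 0 < s := hd.trans_lt hds
  have hb : z ∈ resolventSet 𝕜 b := by
    refine mem_resolventSet_of_norm_sub_mul_lt hz ?_
    calc ‖a - b‖ * ‖resolvent a z‖ ≤ d * s⁻¹ := by gcongr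
      _ < 1 := by rwa [mul_inv_lt_iff₀ hs, one_mul]
  refine ⟨hb, ?_⟩
  have hid : resolvent b z = resolvent a z - resolvent a z * (a - b) * resolvent b z := by
    rw [← resolvent_sub_resolvent hz hb, sub_sub_cancel]
  have hrec : ‖resolvent b z‖ ≤ s⁻¹ * (1 + d * ‖resolvent b z‖) := by
    calc ‖resolvent b z‖ = ‖resolvent a z - resolvent a z * (a - b) * resolvent b z‖ :=
          congrArg norm hid
      _ ≤ ‖resolvent a z‖ + ‖resolvent a z‖ * ‖a - b‖ * ‖resolvent b z‖ :=
          (norm_sub_le _ _).trans (add_le_add_right norm_mul₃_le _)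
      _ ≤ s⁻¹ + s⁻¹ * d * ‖resolvent b z‖ := by gcongr
      _ = s⁻¹ * (1 + d * ‖resolvent b z‖) := by ring
  rw [le_inv_mul_iff₀ hs] at hrec
  rw [← one_div, le_div_iff₀ (sub_pos.2 hds)]
  linarith

end NormedAlgebra

theorem circleIntegrable_resolvent {A : Type*} [NormedRing A] [NormedAlgebra ℂ A]
    [CompleteSpace A] {a : A} {c : ℂ} {r : ℝ} (hr : 0 ≤ r) (h : sphere c r ⊆ resolventSet ℂ a) :
    CircleIntegrable (resolvent a) c r :=
  ContinuousOn.circleIntegrable hr fun _ hz =>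
    (hasDerivAt_resolvent_const_left (h hz)).continuousAt.continuousWithinAt

end spectrum

noncomputable def rieszProjection {A : Type*} [NormedRing A] [NormedAlgebra ℂ A] (a : A) (c : ℂ)
    (r : ℝ) : A :=
  (2 * π * I)⁻¹ • ∮ z in C(c, r), resolvent a z

namespace IsStarNormal

variable {A : Type*} [CStarAlgebra A]

theorem norm_inv_le (u : Aˣ) [IsStarNormal (u : A)] {r : ℝ} (hr : 0 < r)
    (h : ∀ k ∈ spectrum ℂ (u : A), r ≤ ‖k‖) : ‖(↑u⁻¹ : A)‖ ≤ r⁻¹ := by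
  have hrad : spectralRadius ℂ (↑u⁻¹ : A) ≤ ENNReal.ofReal r⁻¹ := by
    refine iSup₂_le fun k hk => ?_
    rw [← spectrum.map_inv, Set.mem_inv] at hk
    have hk' : ‖k‖ ≤ r⁻¹ := by simpa using inv_anti₀ hr (h _ hk)
    rw [← enorm_eq_nnnorm, ← ofReal_norm]
    exact ENNReal.ofReal_le_ofReal hk'
  rwa [spectralRadius_eq_nnnorm, ← enorm_eq_nnnorm, ← ofReal_norm,
    ENNReal.ofReal_le_ofReal_iff (by positivity)] at hrad

theorem norm_resolvent_le {a : A} [IsStarNormal a] {z : ℂ} {r : ℝ} (hr : 0 < r)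
    (h : ∀ k ∈ spectrum ℂ a, r ≤ ‖z - k‖) : z ∈ resolventSet ℂ a ∧ ‖resolvent a z‖ ≤ r⁻¹ := by
  have hz : z ∈ resolventSet ℂ a :=
    spectrum.mem_resolventSet_iff.mpr <| spectrum.notMem_iff.mp fun hmem => by
      simpa using hr.trans_le (h z hmem)
  refine ⟨hz, ?_⟩
  have : IsStarNormal (algebraMap ℂ A z) := ⟨Algebra.commute_algebraMap_right z _⟩
  have : IsStarNormal (hz.unit : A) := by
    rw [hz.unit_spec]
    exact (Algebra.commute_algebraMap_left z _).isStarNormal_sub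
  rw [spectrum.resolvent_eq hz]
  refine norm_inv_le _ hr fun k hk => ?_
  rw [hz.unit_spec, ← spectrum.singleton_sub_eq] at hk
  obtain ⟨_, rfl, κ, hκ, rfl⟩ := hk
  exact h κ hκ

theorem norm_rieszProjection_sub_le {a b : A} [IsStarNormal a] {c : ℂ} {r δ : ℝ}
    (hsep : ∀ z ∈ sphere c r, ∀ k ∈ spectrum ℂ a, r ≤ ‖z - k‖) (hab : ‖a - b‖ ≤ δ)
    (hδr : δ < r) : ‖rieszProjection a c r - rieszProjection b c r‖ ≤ δ / (r - δ) := by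
  have hδ : 0 ≤ δ := (norm_nonneg _).trans hab
  have hr : 0 < r := hδ.trans_lt hδr
  have hres : ∀ z ∈ sphere c r, z ∈ resolventSet ℂ a ∧ ‖resolvent a z‖ ≤ r⁻¹ := fun z hz =>
    norm_resolvent_le hr (hsep z hz)
  have hres' : ∀ z ∈ sphere c r, z ∈ resolventSet ℂ b ∧ ‖resolvent b z‖ ≤ (r - δ)⁻¹ :=
    fun z hz => spectrum.norm_resolvent_le_of_norm_sub_le (hres z hz).1 (hres z hz).2 hab hδr
  have hdiff : ∀ z ∈ sphere c r, ‖resolvent a z - resolvent b z‖ ≤ r⁻¹ * δ * (r - δ)⁻¹ := by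
    intro z hz
    rw [spectrum.resolvent_sub_resolvent (hres z hz).1 (hres' z hz).1]
    grw [norm_mul₃_le, (hres z hz).2, hab, (hres' z hz).2]
  rw [rieszProjection, rieszProjection, ← smul_sub, ← circleIntegral.integral_sub
    (spectrum.circleIntegrable_resolvent hr.le fun z hz => (hres z hz).1)
    (spectrum.circleIntegrable_resolvent hr.le fun z hz => (hres' z hz).1)]
  calc _ ≤ r * (r⁻¹ * δ * (r - δ)⁻¹) :=
        circleIntegral.norm_two_pi_i_inv_smul_integral_le_of_norm_le_const hr.le hdiff
    _ = δ / (r - δ) := by field_simp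

end IsStarNormal

theorem stmt2_general {X : Type*} [NormedAddCommGroup X] [InnerProductSpace ℂ X] [CompleteSpace X]
    (K Kδ : X →L[ℂ] X)
    (hK : IsSelfAdjoint K)
    (μ ρ δ : ℝ) (hδρ : δ < ρ / 2)
    (hiso : ρ ≤ Metric.infDist (μ : ℂ) (spectrum ℂ K \ {(μ : ℂ)}))
    (hnorm : ‖K - Kδ‖ ≤ δ) :
    ‖((2 * π * Complex.I : ℂ)⁻¹ •
        (∮ z in C((μ : ℂ), ρ / 2), Ring.inverse (z • (1 : X →L[ℂ] X) - K))) -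
      ((2 * π * Complex.I : ℂ)⁻¹ •
        (∮ z in C((μ : ℂ), ρ / 2), Ring.inverse (z • (1 : X →L[ℂ] X) - Kδ)))‖ ≤
      δ / (ρ / 2 - δ) := by
  have : IsStarNormal K := hK.isStarNormal
  have hsep : ∀ z ∈ sphere (μ : ℂ) (ρ / 2), ∀ k ∈ spectrum ℂ K, ρ / 2 ≤ ‖z - k‖ :=
    fun z hz k hk => dist_eq_norm z k ▸ half_le_dist_of_mem_sphere_of_le_infDist hiso hz hk
  simpa only [rieszProjection, resolvent, Algebra.algebraMap_eq_smul_one] using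
    this.norm_rieszProjection_sub_le hsep hnorm hδρ

/-- If `λ_n` is an eigenvalue of the self-adjoint compact operator `K` with
`dist(λ_n, spec(K)\{λ_n}) ≥ ρ` and `‖K - K^δ‖ ≤ δ < ρ/2`, then the Riesz spectral
projections `P_n = (2πi)⁻¹ ∮_{Γ_n} (λI - K)⁻¹ dλ` and
`P_n^δ = (2πi)⁻¹ ∮_{Γ_n} (λI - K^δ)⁻¹ dλ` (over the circle `Γ_n` of radius `ρ/2`
around `λ_n`) satisfy `‖P_n - P_n^δ‖ ≤ δ/(ρ/2 - δ)`. -/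
theorem stmt2 {X : Type*} [NormedAddCommGroup X] [InnerProductSpace ℂ X] [CompleteSpace X]
    (K Kδ : X →L[ℂ] X)
    (hK : IsSelfAdjoint K) (hKδ : IsSelfAdjoint Kδ)
    (hKc : IsCompactOperator ⇑K) (hKδc : IsCompactOperator ⇑Kδ)
    (μ ρ δ : ℝ) (hρ : 0 < ρ) (hδ : 0 < δ) (hδρ : δ < ρ / 2)
    (hμ : (μ : ℂ) ∈ spectrum ℂ K)
    (hiso : ρ ≤ Metric.infDist (μ : ℂ) (spectrum ℂ K \ {(μ : ℂ)}))
    (hnorm : ‖K - Kδ‖ ≤ δ) :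
    ‖((2 * π * Complex.I : ℂ)⁻¹ •
        (∮ z in C((μ : ℂ), ρ / 2), Ring.inverse (z • (1 : X →L[ℂ] X) - K))) -
      ((2 * π * Complex.I : ℂ)⁻¹ •
        (∮ z in C((μ : ℂ), ρ / 2), Ring.inverse (z • (1 : X →L[ℂ] X) - Kδ)))‖ ≤
      δ / (ρ / 2 - δ) :=
  stmt2_general K Kδ hK μ ρ δ hδρ hiso hnorm
end

section
/- The minimizer over x ∈ X of the GLSM functional J_α(x; ℓ) = α⟨x, Ax⟩ + ‖Ax − ℓ‖²_{X*}, where A is a positive compact operator with singular system {λ_n; x_n; ℓ_n}, is given by x^α = Σ_n (λ_n/(αλ_n + λ_n²)) conj(⟨x_n, ℓ⟩) x_n, i.e., the spectral regularization with filter φ_α(t) = t/(α + t). -/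
/-!
Since `A` is Hermitian and nonnegative, the functional is a convex quadratic:
`J(z + e) = J(z) + 2 Re J'(z) e + (α Re (A e) e + ‖A e‖²)` with the last term nonnegative, so every
critical point is a global minimizer. The first variation `J'(xα)` is a continuous linear
functional, hence vanishes once it vanishes on the densely spanning `x_m`; there
`(A xα)(x_m) = φ_α(λ_m) ℓ(x_m)` with `φ_α(λ) = λ / (α + λ)`, which is exactly the root of
`α φ + λ (φ - 1) = 0`.
-/

open InnerProductSpace

section Sesquilinear

variable {X : Type*} [NormedAddCommGroup X] [NormedSpace ℂ X]

theorem re_apply_comm_of_forall_im_apply_self_eq_zero (A : X →SL[starRingEnd ℂ] StrongDual ℂ X)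
    (him : ∀ w, (A w w).im = 0) (u v : X) : (A u v).re = (A v u).re := by
  have h := him (u + Complex.I • v)
  have hu := him u
  have hv := him v
  simp only [map_add, map_smulₛₗ, add_apply, smul_apply, RingHom.id_apply, Complex.conj_I,
    smul_eq_mul, Complex.add_im, Complex.add_re, Complex.mul_im, Complex.mul_re, Complex.neg_re,
    Complex.neg_im, Complex.I_re, Complex.I_im] at h
  linarith

theorem apply_apply_of_hasSum {ι : Type*} [DecidableEq ι]
    (A : X →SL[starRingEnd ℂ] StrongDual ℂ X)
    {lam : ι → ℝ} {x : ι → X} {l : ι → StrongDual ℂ X} (hAx : ∀ n, A (x n) = (lam n : ℂ) • l n)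
    (hdual : ∀ n m, l n (x m) = if n = m then 1 else 0) {a : ι → ℂ} {z : X}
    (hz : HasSum (fun n => a n • x n) z) (m : ι) :
    A z (x m) = starRingEnd ℂ (a m) * lam m := by
  have h := (ContinuousLinearMap.apply ℂ ℂ (x m)).hasSum (A.hasSum hz)
  simp only [map_smulₛₗ, hAx, ContinuousLinearMap.apply_apply, smul_eq_mul, RingHom.id_apply,
    hdual, mul_ite, mul_one, mul_zero] at h
  simpa using h.unique (hasSum_single m fun n hn => if_neg hn)

end Sesquilinear

section Hilbert

variable {X : Type*} [NormedAddCommGroup X] [InnerProductSpace ℂ X] [CompleteSpace X]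

theorem eq_toDual_of_apply_orthonormal {ι : Type*} [DecidableEq ι] {x : ι → X}
    (hx : Orthonormal ℂ x) (hdense : Dense (Submodule.span ℂ (Set.range x) : Set X))
    {φ : StrongDual ℂ X} {m : ι} (hφ : ∀ n, φ (x n) = if m = n then 1 else 0) :
    φ = toDual ℂ X (x m) :=
  ContinuousLinearMap.ext_on hdense <| by
    rintro _ ⟨n, rfl⟩
    rw [hφ, toDual_apply_apply, orthonormal_iff_ite.mp hx]

theorem norm_add_sq_strongDual (φ ψ : StrongDual ℂ X) :
    ‖φ + ψ‖ ^ 2 = ‖φ‖ ^ 2 + 2 * (φ ((toDual ℂ X).symm ψ)).re + ‖ψ‖ ^ 2 := by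
  simp only [← (toDual ℂ X).symm.norm_map, map_add, norm_add_sq (𝕜 := ℂ), toDual_symm_apply]
  rfl

noncomputable def glsmFunctional (A : X →SL[starRingEnd ℂ] StrongDual ℂ X) (α : ℝ)
    (f : StrongDual ℂ X) (y : X) : ℝ :=
  α * (A y y).re + ‖A y - f‖ ^ 2

/-- The first variation `e ↦ α (A z) e + ⟪A z - f, A e⟫_{X*}` of `glsmFunctional A α f` at `z`,
with the inner product of `X*` transported from `X` by the Riesz map. -/
noncomputable def glsmGradient (A : X →SL[starRingEnd ℂ] StrongDual ℂ X) (α : ℝ)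
    (f : StrongDual ℂ X) (z : X) : StrongDual ℂ X :=
  (α : ℂ) • A z + (A z - f).comp
    ((toDual ℂ X).symm.toContinuousLinearEquiv.toContinuousLinearMap.comp A)

theorem glsmGradient_apply (A : X →SL[starRingEnd ℂ] StrongDual ℂ X) (α : ℝ) (f : StrongDual ℂ X)
    (z e : X) : glsmGradient A α f z e = α * A z e + (A z - f) ((toDual ℂ X).symm (A e)) := rfl

theorem glsmFunctional_add (A : X →SL[starRingEnd ℂ] StrongDual ℂ X) (α : ℝ)
    (f : StrongDual ℂ X) (hsymm : ∀ u v, (A u v).re = (A v u).re) (z e : X) :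
    glsmFunctional A α f (z + e) = glsmFunctional A α f z + 2 * (glsmGradient A α f z e).re
      + (α * (A e e).re + ‖A e‖ ^ 2) := by
  have hsplit : A (z + e) - f = (A z - f) + A e := by rw [map_add]; abel
  rw [glsmFunctional, hsplit, norm_add_sq_strongDual]
  simp only [glsmFunctional, glsmGradient_apply, map_add, add_apply, Complex.add_re,
    Complex.re_ofReal_mul, hsymm e z]
  ring

theorem glsmFunctional_le_of_glsmGradient_eq_zero (A : X →SL[starRingEnd ℂ] StrongDual ℂ X)
    {α : ℝ} (hα : 0 ≤ α) (f : StrongDual ℂ X) (hsymm : ∀ u v, (A u v).re = (A v u).re)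
    (hpos : ∀ w, 0 ≤ (A w w).re) {z : X} (hz : glsmGradient A α f z = 0) (y : X) :
    glsmFunctional A α f z ≤ glsmFunctional A α f y := by
  have h := glsmFunctional_add A α f hsymm z (y - z)
  rw [add_sub_cancel, hz, zero_apply, Complex.zero_re] at h
  linarith [mul_nonneg hα (hpos (y - z)), sq_nonneg ‖A (y - z)‖]

theorem glsmGradient_apply_eq_zero {ι : Type*} [DecidableEq ι]
    (A : X →SL[starRingEnd ℂ] StrongDual ℂ X) {α : ℝ} (hα : 0 ≤ α) (f : StrongDual ℂ X)
    {lam : ι → ℝ} {x : ι → X} {l : ι → StrongDual ℂ X} (hAx : ∀ n, A (x n) = (lam n : ℂ) • l n)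
    (hdual : ∀ n m, l n (x m) = if n = m then 1 else 0) {z : X}
    (hz : HasSum (fun n => (((lam n / (α * lam n + lam n ^ 2) : ℝ) : ℂ) *
      starRingEnd ℂ (f (x n))) • x n) z)
    {m : ι} (hlam : 0 < lam m) (hl : l m = toDual ℂ X (x m)) :
    glsmGradient A α f z (x m) = 0 := by
  have hAz := apply_apply_of_hasSum A hAx hdual hz m
  have hAxm : (toDual ℂ X).symm (A (x m)) = (lam m : ℂ) • x m := by
    rw [hAx, map_smulₛₗ, hl, LinearIsometryEquiv.symm_apply_apply, Complex.conj_ofReal]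
  have hne : (α : ℂ) + lam m ≠ 0 := by exact_mod_cast (by positivity : α + lam m ≠ 0)
  rw [glsmGradient_apply, hAxm, map_smul, sub_apply, hAz]
  simp only [map_mul, Complex.conj_ofReal, Complex.conj_conj, smul_eq_mul]
  push_cast
  field_simp
  ring

end Hilbert

theorem stmt14_general {X : Type*} [NormedAddCommGroup X] [InnerProductSpace ℂ X] [CompleteSpace X]
    (A : X →SL[starRingEnd ℂ] StrongDual ℂ X)
    (hApos : ∀ x : X, x ≠ 0 → 0 < ((A x) x).re ∧ ((A x) x).im = 0)
    (lam : ℕ → ℝ) (x : ℕ → X) (l : ℕ → StrongDual ℂ X)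
    (hlampos : ∀ n, 0 < lam n) (hx : Orthonormal ℂ x)
    (hAx : ∀ n, A (x n) = (lam n : ℂ) • l n)
    (hdual : ∀ n m, (l n) (x m) = if n = m then (1 : ℂ) else 0)
    (hspan : (Submodule.span ℂ (Set.range x)).topologicalClosure = ⊤)
    (α : ℝ) (hα : 0 < α) (f : StrongDual ℂ X) (xα : X)
    (hxα : HasSum
      (fun n => (((lam n / (α * lam n + (lam n) ^ 2) : ℝ) : ℂ) *
        (starRingEnd ℂ) (f (x n))) • x n) xα) :
    ∀ y : X,
      α * ((A xα) xα).re + ‖A xα - f‖ ^ 2 ≤ α * ((A y) y).re + ‖A y - f‖ ^ 2 := by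
  have him (w : X) : ((A w) w).im = 0 := by
    rcases eq_or_ne w 0 with rfl | hw
    · simp
    · exact (hApos w hw).2
  have hpos (w : X) : 0 ≤ ((A w) w).re := by
    rcases eq_or_ne w 0 with rfl | hw
    · simp
    · exact (hApos w hw).1.le
  have hdense : Dense (Submodule.span ℂ (Set.range x) : Set X) :=
    Submodule.dense_iff_topologicalClosure_eq_top.mpr hspan
  have hgrad : glsmGradient A α f xα = 0 :=
    ContinuousLinearMap.ext_on hdense <| by
      rintro _ ⟨m, rfl⟩
      exact glsmGradient_apply_eq_zero A hα.le f hAx hdual hxα (hlampos m)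
        (eq_toDual_of_apply_orthonormal hx hdense (hdual m))
  exact glsmFunctional_le_of_glsmGradient_eq_zero A hα.le f
    (re_apply_comm_of_forall_im_apply_self_eq_zero A him) hpos hgrad

/-- The minimizer over `x ∈ X` of the GLSM functional
`J_α(x; ℓ) = α⟨x, Ax⟩ + ‖Ax - ℓ‖²_{X*}`, where `A : X → X*` is a positive compact
operator with singular system `{λ_n; x_n; ℓ_n}` (`A x_n = λ_n ℓ_n`), is
`x^α = Σ (λ_n/(αλ_n + λ_n²)) conj(⟨x_n, ℓ⟩) x_n`, i.e. the spectral regularization with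
filter `φ_α(t) = t/(α + t)`. -/
theorem stmt14 {X : Type*} [NormedAddCommGroup X] [InnerProductSpace ℂ X] [CompleteSpace X]
    (A : X →SL[starRingEnd ℂ] StrongDual ℂ X)
    (hAc : IsCompactOperator ⇑A)
    (hApos : ∀ x : X, x ≠ 0 → 0 < ((A x) x).re ∧ ((A x) x).im = 0)
    (lam : ℕ → ℝ) (x : ℕ → X) (l : ℕ → StrongDual ℂ X)
    (hlampos : ∀ n, 0 < lam n) (hx : Orthonormal ℂ x)
    (hAx : ∀ n, A (x n) = (lam n : ℂ) • l n)
    (hdual : ∀ n m, (l n) (x m) = if n = m then (1 : ℂ) else 0)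
    (hlorth : Orthonormal ℂ (fun n => (InnerProductSpace.toDual ℂ X).symm (l n)))
    (hspan : (Submodule.span ℂ (Set.range x)).topologicalClosure = ⊤)
    (α : ℝ) (hα : 0 < α) (f : StrongDual ℂ X) (xα : X)
    (hxα : HasSum
      (fun n => (((lam n / (α * lam n + (lam n) ^ 2) : ℝ) : ℂ) *
        (starRingEnd ℂ) (f (x n))) • x n) xα) :
    ∀ y : X,
      α * ((A xα) xα).re + ‖A xα - f‖ ^ 2 ≤ α * ((A y) y).re + ‖A y - f‖ ^ 2 :=
  stmt14_general A hApos lam x l hlampos hx hAx hdual hspan α hα f xα hxα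
end

section
/- If T : V → V is bounded and can be written as the sum of a coercive operator and a compact operator on a closed subspace W ⊆ V, and the imaginary part Im(T) is strictly positive on W\{0}, then there is a constant c > 0 such that |(Tv, v)_V| ≥ c‖v‖² for all v ∈ W (i.e., T is strictly coercive in modulus on W). -/
open Filter Topology RCLike
open scoped InnerProductSpace

/-! If the estimate failed there would be unit vectors `uₙ ∈ W` with `⟪T uₙ, uₙ⟫ → 0`. Along an
ultrafilter (in place of a subsequence) they converge weakly to some `v ∈ W`, and `C uₙ → C v`
strongly because `C` is compact. Passing to the limit in
`Re ⟪T uₙ, uₙ⟫ ≥ c₀ + Re ⟪C uₙ, uₙ⟫` gives `c₀ + Re ⟪C v, v⟫ ≤ 0`, so `v ≠ 0`; on the other hand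
the form of `Im T` is nonnegative on `W`, hence weakly lower semicontinuous there, so
`⟪(Im T) v, v⟫ ≤ lim ⟪(Im T) uₙ, uₙ⟫ = 0`, contradicting strict positivity. -/

section WeakConvergence

variable {𝕜 V E α : Type*} [RCLike 𝕜] [NormedAddCommGroup V] [InnerProductSpace 𝕜 V]
  [NormedAddCommGroup E] [InnerProductSpace 𝕜 E]

variable (𝕜) in
def TendstoWeakly (u : α → V) (l : Filter α) (v : V) : Prop :=
  ∀ w : V, Tendsto (fun a ↦ ⟪u a, w⟫_𝕜) l (𝓝 ⟪v, w⟫_𝕜)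

theorem Filter.Tendsto.tendstoWeakly {u : α → V} {l : Filter α} {v : V}
    (hu : Tendsto u l (𝓝 v)) : TendstoWeakly 𝕜 u l v :=
  fun _ ↦ hu.inner tendsto_const_nhds

namespace TendstoWeakly

variable {u : α → V} {l : Filter α} {v : V}

theorem inner_left (hu : TendstoWeakly 𝕜 u l v) (w : V) :
    Tendsto (fun a ↦ ⟪w, u a⟫_𝕜) l (𝓝 ⟪w, v⟫_𝕜) := by
  simpa only [Function.comp_def, inner_conj_symm] using
    ((continuous_conj (K := 𝕜)).tendsto _).comp (hu w)

theorem unique [l.NeBot] {v' : V} (hu : TendstoWeakly 𝕜 u l v) (hu' : TendstoWeakly 𝕜 u l v') :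
    v = v' :=
  ext_inner_right 𝕜 fun w ↦ tendsto_nhds_unique (hu w) (hu' w)

theorem map [CompleteSpace V] [CompleteSpace E] (hu : TendstoWeakly 𝕜 u l v) (A : V →L[𝕜] E) :
    TendstoWeakly 𝕜 (fun a ↦ A (u a)) l (A v) := fun w ↦ by
  simpa only [ContinuousLinearMap.adjoint_inner_right] using hu (A.adjoint w)

theorem mem_of_isClosed [CompleteSpace V] [l.NeBot] {W : Submodule 𝕜 V}
    (hW : IsClosed (W : Set V)) (hu : TendstoWeakly 𝕜 u l v) (huW : ∀ a, u a ∈ W) : v ∈ W := by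
  rw [← SetLike.mem_coe, ← hW.closure_eq, ← Submodule.topologicalClosure_coe,
    ← Submodule.orthogonal_orthogonal_eq_closure, SetLike.mem_coe, Submodule.mem_orthogonal]
  intro x hx
  have hxu : ∀ a, ⟪x, u a⟫_𝕜 = 0 := fun a ↦ (W.mem_orthogonal' x).1 hx _ (huW a)
  exact tendsto_nhds_unique (hu.inner_left x) (by simpa only [hxu] using tendsto_const_nhds)

theorem tendsto_inner {x : α → V} {y : V} {M : ℝ} (hu : TendstoWeakly 𝕜 u l v)
    (huM : ∀ a, ‖u a‖ ≤ M) (hx : Tendsto x l (𝓝 y)) :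
    Tendsto (fun a ↦ ⟪x a, u a⟫_𝕜) l (𝓝 ⟪y, v⟫_𝕜) := by
  have hsplit : ∀ a, ⟪x a, u a⟫_𝕜 = ⟪x a - y, u a⟫_𝕜 + ⟪y, u a⟫_𝕜 := fun a ↦ by
    rw [inner_sub_left, sub_add_cancel]
  have hsmall : Tendsto (fun a ↦ ⟪x a - y, u a⟫_𝕜) l (𝓝 0) := by
    refine squeeze_zero_norm (a := fun a ↦ ‖x a - y‖ * M) (fun a ↦ ?_) ?_
    · exact (norm_inner_le_norm _ _).trans (by gcongr; exact huM a)
    · simpa using (tendsto_iff_norm_sub_tendsto_zero.1 hx).mul_const M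
  simpa only [hsplit, zero_add] using hsmall.add (hu.inner_left y)

/-- Weak lower semicontinuity of a quadratic form that is nonnegative on `W`. -/
theorem re_inner_le [CompleteSpace V] [l.NeBot] {S : V →L[𝕜] V} {W : Submodule 𝕜 V}
    (hS : ∀ x ∈ W, 0 ≤ re ⟪S x, x⟫_𝕜) (hu : TendstoWeakly 𝕜 u l v) (huW : ∀ a, u a ∈ W)
    (hvW : v ∈ W) {L : ℝ} (hL : Tendsto (fun a ↦ re ⟪S (u a), u a⟫_𝕜) l (𝓝 L)) :
    re ⟪S v, v⟫_𝕜 ≤ L := by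
  have hexpand : ∀ a, re ⟪S (u a - v), u a - v⟫_𝕜 =
      re ⟪S (u a), u a⟫_𝕜 - re ⟪S (u a), v⟫_𝕜 - re ⟪S v, u a⟫_𝕜 + re ⟪S v, v⟫_𝕜 := fun a ↦ by
    simp only [map_sub, inner_sub_left, inner_sub_right]
    ring
  have hre := (continuous_re (K := 𝕜)).tendsto
  have hlim : Tendsto (fun a ↦ re ⟪S (u a - v), u a - v⟫_𝕜) l
      (𝓝 (L - re ⟪S v, v⟫_𝕜 - re ⟪S v, v⟫_𝕜 + re ⟪S v, v⟫_𝕜)) := by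
    simp only [hexpand]
    exact ((hL.sub ((hre _).comp (hu.map S v))).sub ((hre _).comp (hu.inner_left (S v)))).add
      tendsto_const_nhds
  have := ge_of_tendsto' hlim fun a ↦ hS _ (W.sub_mem (huW a) hvW)
  linarith

end TendstoWeakly

theorem exists_tendstoWeakly_of_norm_le [CompleteSpace V] (ℱ : Ultrafilter α) {u : α → V}
    {M : ℝ} (huM : ∀ a, ‖u a‖ ≤ M) : ∃ v, TendstoWeakly 𝕜 u ℱ v := by
  have hlim : ∀ w : V, ∃ z : 𝕜, ‖z‖ ≤ M * ‖w‖ ∧ Tendsto (fun a ↦ ⟪u a, w⟫_𝕜) ℱ (𝓝 z) := by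
    intro w
    have hmem : Metric.closedBall 0 (M * ‖w‖) ∈ ℱ.map fun a ↦ ⟪u a, w⟫_𝕜 :=
      Filter.mem_map.2 <| univ_mem' fun a ↦ mem_closedBall_zero_iff.2 <|
        (norm_inner_le_norm _ _).trans (mul_le_mul_of_nonneg_right (huM a) (norm_nonneg w))
    obtain ⟨z, hz, hlim⟩ := (isCompact_closedBall _ _).ultrafilter_le_nhds' _ hmem
    exact ⟨z, mem_closedBall_zero_iff.1 hz, hlim⟩
  choose g hg_le hg using hlim
  let φ : StrongDual 𝕜 V := LinearMap.mkContinuous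
    { toFun := g
      map_add' := fun w w' ↦ tendsto_nhds_unique (hg _) <| by
        simpa only [inner_add_right] using (hg w).add (hg w')
      map_smul' := fun c w ↦ tendsto_nhds_unique (hg _) <| by
        simpa only [inner_smul_right, smul_eq_mul, RingHom.id_apply] using (hg w).const_mul c }
    M hg_le
  refine ⟨(InnerProductSpace.toDual 𝕜 V).symm φ, fun w ↦ ?_⟩
  rw [InnerProductSpace.toDual_symm_apply]
  exact hg w

theorem IsCompactOperator.tendsto_of_tendstoWeakly [CompleteSpace V] [CompleteSpace E]
    {C : V →L[𝕜] E} (hC : IsCompactOperator C) (ℱ : Ultrafilter α) {u : α → V} {v : V}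
    {M : ℝ} (huM : ∀ a, ‖u a‖ ≤ M) (hu : TendstoWeakly 𝕜 u ℱ v) :
    Tendsto (fun a ↦ C (u a)) ℱ (𝓝 (C v)) := by
  obtain ⟨K, hK, hCK⟩ := hC.image_closedBall_subset_compact (f := (C : V →ₗ[𝕜] E)) M
  have hmem : K ∈ ℱ.map fun a ↦ C (u a) :=
    Filter.mem_map.2 (univ_mem' fun a ↦ hCK ⟨u a, mem_closedBall_zero_iff.2 (huM a), rfl⟩)
  obtain ⟨y, -, hy⟩ := hK.ultrafilter_le_nhds' _ hmem
  have hy : Tendsto (fun a ↦ C (u a)) ℱ (𝓝 y) := hy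
  rwa [(hu.map C).unique hy.tendstoWeakly]

end WeakConvergence

section Coercivity

variable {𝕜 V : Type*} [RCLike 𝕜] [NormedAddCommGroup V] [InnerProductSpace 𝕜 V]

theorem exists_norm_eq_one_norm_inner_lt {T : V →L[𝕜] V} {W : Submodule 𝕜 V}
    (hT : ¬∃ c > 0, ∀ v ∈ W, c * ‖v‖ ^ 2 ≤ ‖⟪T v, v⟫_𝕜‖) {ε : ℝ} (hε : 0 < ε) :
    ∃ u ∈ W, ‖u‖ = 1 ∧ ‖⟪T u, u⟫_𝕜‖ < ε := by
  push Not at hT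
  obtain ⟨v, hvW, hv⟩ := hT ε hε
  have hv0 : v ≠ 0 := by
    rintro rfl
    simp at hv
  refine ⟨(‖v‖⁻¹ : 𝕜) • v, W.smul_mem _ hvW, norm_smul_inv_norm hv0, ?_⟩
  calc ‖⟪T ((‖v‖⁻¹ : 𝕜) • v), (‖v‖⁻¹ : 𝕜) • v⟫_𝕜‖ = ‖v‖⁻¹ * ‖v‖⁻¹ * ‖⟪T v, v⟫_𝕜‖ := by
        simp only [map_smul, inner_smul_left, inner_smul_right, norm_mul, RCLike.norm_conj,
          norm_inv, RCLike.norm_ofReal, abs_norm, mul_assoc]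
    _ < ‖v‖⁻¹ * ‖v‖⁻¹ * (ε * ‖v‖ ^ 2) := by gcongr
    _ = ε := by field_simp

theorem exists_seq_norm_eq_one_tendsto_inner_zero {T : V →L[𝕜] V} {W : Submodule 𝕜 V}
    (hT : ¬∃ c > 0, ∀ v ∈ W, c * ‖v‖ ^ 2 ≤ ‖⟪T v, v⟫_𝕜‖) :
    ∃ u : ℕ → V, (∀ n, u n ∈ W) ∧ (∀ n, ‖u n‖ = 1) ∧
      Tendsto (fun n ↦ ⟪T (u n), u n⟫_𝕜) atTop (𝓝 0) := by
  choose u huW hu1 hsmall using fun n : ℕ ↦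
    exists_norm_eq_one_norm_inner_lt hT (Nat.one_div_pos_of_nat (α := ℝ) (n := n))
  exact ⟨u, huW, hu1,
    squeeze_zero_norm (fun n ↦ (hsmall n).le) tendsto_one_div_add_atTop_nhds_zero_nat⟩

end Coercivity

section ComplexParts

variable {V : Type*} [NormedAddCommGroup V] [InnerProductSpace ℂ V] [CompleteSpace V]

theorem re_inner_realPart_apply_self (T : V →L[ℂ] V) (x : V) :
    (⟪((2 : ℂ)⁻¹ • (T + ContinuousLinearMap.adjoint T)) x, x⟫_ℂ).re = (⟪T x, x⟫_ℂ).re := by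
  simp only [smul_apply, add_apply, inner_smul_left, inner_add_left,
    ContinuousLinearMap.adjoint_inner_left]
  rw [← inner_conj_symm x (T x), Complex.add_conj, map_inv₀, map_ofNat, Complex.ofReal_mul,
    Complex.ofReal_ofNat, inv_mul_cancel_left₀ two_ne_zero, Complex.ofReal_re]

/-- The sign comes from `⟪·, ·⟫_ℂ` being conjugate-linear in its first argument. -/
theorem re_inner_imPart_apply_self (T : V →L[ℂ] V) (x : V) :
    (⟪((2 * Complex.I : ℂ)⁻¹ • (T - ContinuousLinearMap.adjoint T)) x, x⟫_ℂ).re =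
      -(⟪T x, x⟫_ℂ).im := by
  simp only [smul_apply, sub_apply, inner_smul_left, inner_sub_left,
    ContinuousLinearMap.adjoint_inner_left]
  rw [← inner_conj_symm x (T x), Complex.sub_conj, map_inv₀, map_mul, Complex.conj_I, map_ofNat]
  generalize (⟪T x, x⟫_ℂ).im = t
  have : (2 * -Complex.I)⁻¹ * (↑(2 * t) * Complex.I) = ((-t : ℝ) : ℂ) := by
    push_cast
    field_simp
  rw [this, Complex.ofReal_re]

theorem re_inner_add_le_re_inner_of_realPart_eq {T T₀ C : V →L[ℂ] V} {W : Submodule ℂ V} {c₀ : ℝ}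
    (hRe : (2 : ℂ)⁻¹ • (T + ContinuousLinearMap.adjoint T) = T₀ + C)
    (hT₀ : ∀ v ∈ W, c₀ * ‖v‖ ^ 2 ≤ (⟪T₀ v, v⟫_ℂ).re) {x : V} (hx : x ∈ W) :
    c₀ * ‖x‖ ^ 2 + (⟪C x, x⟫_ℂ).re ≤ (⟪T x, x⟫_ℂ).re := by
  rw [← re_inner_realPart_apply_self T, hRe, add_apply, inner_add_left, Complex.add_re]
  linarith [hT₀ x hx]

end ComplexParts

/-- If `T : V → V` is bounded, its real part `Re(T) = (T + T*)/2` is the sum of an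
operator coercive on the closed subspace `W` and a compact operator, and its imaginary
part `Im(T) = (T - T*)/(2i)` is strictly positive on `W \ {0}`, then there is `c > 0`
with `|(Tv, v)| ≥ c‖v‖²` for all `v ∈ W`, i.e. `T` is strictly coercive in modulus
on `W`. -/
theorem stmt18 {V : Type*} [NormedAddCommGroup V] [InnerProductSpace ℂ V] [CompleteSpace V]
    (T : V →L[ℂ] V) (W : Submodule ℂ V) (hW : IsClosed (W : Set V))
    (T₀ C : V →L[ℂ] V) (c₀ : ℝ) (hc₀ : 0 < c₀)
    (hRe : (2 : ℂ)⁻¹ • (T + ContinuousLinearMap.adjoint T) = T₀ + C)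
    (hT₀ : ∀ v ∈ W, c₀ * ‖v‖ ^ 2 ≤ ((inner ℂ (T₀ v) v : ℂ)).re)
    (hC : IsCompactOperator ⇑C)
    (hIm : ∀ v ∈ W, v ≠ 0 →
      0 < ((inner ℂ (((2 * Complex.I : ℂ)⁻¹ •
        (T - ContinuousLinearMap.adjoint T)) v) v : ℂ)).re) :
    ∃ c > 0, ∀ v ∈ W, c * ‖v‖ ^ 2 ≤ ‖(inner ℂ (T v) v : ℂ)‖ := by
  by_contra hT
  obtain ⟨u, huW, hu1, hTu⟩ := exists_seq_norm_eq_one_tendsto_inner_zero hT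
  let ℱ := Ultrafilter.of (atTop : Filter ℕ)
  replace hTu := hTu.mono_left (Ultrafilter.of_le atTop)
  have huM : ∀ n, ‖u n‖ ≤ 1 := fun n ↦ (hu1 n).le
  obtain ⟨v, hv⟩ := exists_tendstoWeakly_of_norm_le (𝕜 := ℂ) ℱ huM
  have hvW : v ∈ W := hv.mem_of_isClosed hW huW
  have hCv : c₀ + (⟪C v, v⟫_ℂ).re ≤ 0 := by
    have hCu := hv.tendsto_inner huM (hC.tendsto_of_tendstoWeakly ℱ huM hv)
    refine le_of_tendsto_of_tendsto'
      (tendsto_const_nhds.add (Complex.continuous_re.tendsto _ |>.comp hCu))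
      (Complex.continuous_re.tendsto _ |>.comp hTu) fun n ↦ ?_
    simpa only [Function.comp_apply, hu1 n, one_pow, mul_one] using
      re_inner_add_le_re_inner_of_realPart_eq hRe hT₀ (huW n)
  have hv0 : v ≠ 0 := by
    rintro rfl
    simp only [inner_zero_right, Complex.zero_re, add_zero] at hCv
    linarith
  set S := (2 * Complex.I : ℂ)⁻¹ • (T - ContinuousLinearMap.adjoint T) with hS
  have hS_nonneg : ∀ x ∈ W, 0 ≤ (⟪S x, x⟫_ℂ).re := fun x hx ↦ by
    rcases eq_or_ne x 0 with rfl | hx0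
    · simp
    · exact (hIm x hx hx0).le
  have hSu : Tendsto (fun n ↦ (⟪S (u n), u n⟫_ℂ).re) ℱ (𝓝 0) := by
    simpa only [hS, re_inner_imPart_apply_self, Function.comp_apply, Complex.zero_im, neg_zero]
      using (Complex.continuous_im.tendsto _ |>.comp hTu).neg
  exact (hIm v hvW hv0).not_ge (hv.re_inner_le hS_nonneg huW hvW hSu)
end
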